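/- For every n ≥ 1 and every natural number k with 0 ≤ k ≤ L_{2n−1}: if d is a base-phi expansion of k, then the function d' : ℤ → ℕ defined by d'(2n) = d'(−2n) = 1 and d'(i) = d(i) for all i ∉ {2n, −2n} is a base-phi expansion of L_{2n} + k. (In words: β(L_{2n}+k) = β(L_{2n}) + β(k), the digits add without carries.) -/

import Mathlib

/-- The golden mean φ = (1+√5)/2. -/
noncomputable def phi : ℝ := (1 + Real.sqrt 5) / 2

/-- `d : ℤ → ℕ` is a base-phi expansion of `N`: finitely supported, digits at most 1,
no two consecutive digits equal 1, and `∑ d i * φ^i = N`. -/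
def IsBasePhi (N : ℕ) (d : ℤ → ℕ) : Prop :=
  {i : ℤ | d i ≠ 0}.Finite ∧ (∀ i, d i ≤ 1) ∧ (∀ i, d i * d (i + 1) = 0) ∧
    ∑' i : ℤ, (d i : ℝ) * phi ^ i = (N : ℝ)

/-- The Lucas numbers: L 0 = 2, L 1 = 1, L (n+2) = L (n+1) + L n. -/
def Lucas : ℕ → ℕ
  | 0 => 2
  | 1 => 1
  | n + 2 => Lucas (n + 1) + Lucas n

open Real goldenRatio

lemma phi_gold : phi = goldenRatio := rfl

lemma phi_pos : 0 < phi := goldenRatio_pos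
lemma one_lt_phi : 1 < phi := one_lt_goldenRatio
lemma phi_ne_zero : phi ≠ 0 := goldenRatio_ne_zero
lemma phi_sq : phi ^ 2 = phi + 1 := goldenRatio_sq
lemma psi_sq : goldenConj ^ 2 = goldenConj + 1 := goldenConj_sq
lemma psi_ne_zero : goldenConj ≠ 0 := goldenConj_ne_zero

lemma psi_eq_neg_inv : goldenConj = -phi⁻¹ := by
  rw [phi_gold, inv_goldenRatio]; ring

/-- conjugate powers as negative powers of phi -/
lemma psi_zpow (i : ℤ) : goldenConj ^ i = (-1 : ℝ) ^ i * phi ^ (-i) := by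
  rw [psi_eq_neg_inv, show -phi⁻¹ = (-1) * phi⁻¹ by ring, mul_zpow, zpow_neg, inv_zpow]

lemma psi_zpow_even {i : ℤ} (h : Even i) : goldenConj ^ i = phi ^ (-i) := by
  rw [psi_zpow, h.neg_one_zpow, one_mul]

lemma psi_zpow_odd {i : ℤ} (h : Odd i) : goldenConj ^ i = -phi ^ (-i) := by
  rw [psi_zpow, h.neg_one_zpow]; ring

lemma phi_zpow_rec (a : ℤ) : phi ^ (a + 2) = phi ^ (a + 1) + phi ^ a := by
  have h2 : phi ^ (2:ℤ) = phi + 1 := by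
    rw [show (2:ℤ) = ((2:ℕ):ℤ) from rfl, zpow_natCast, phi_sq]
  rw [zpow_add₀ phi_ne_zero a 2, zpow_add₀ phi_ne_zero a 1, h2, zpow_one]
  ring

lemma lucas_real : ∀ m : ℕ, (Lucas m : ℝ) = phi ^ m + goldenConj ^ m := by
  intro m
  induction m using Nat.strong_induction_on with
  | _ m ih =>
    match m with
    | 0 => simp [Lucas]; norm_num
    | 1 => simp [Lucas, phi_gold]
    | (m + 2) =>
      have h1 := ih (m + 1) (by omega)
      have h0 := ih m (by omega)
      have e1 : phi ^ (m + 2) = phi ^ m * phi ^ 2 := by ring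
      have e2 : goldenConj ^ (m + 2) = goldenConj ^ m * goldenConj ^ 2 := by ring
      show ((Lucas (m + 1) + Lucas m : ℕ) : ℝ) = _
      push_cast
      rw [h1, h0, e1, e2, phi_sq, psi_sq]
      ring

/-- powers via Fibonacci, for any root of x² = x + 1. -/
lemma pow_fib_lin (x : ℝ) (hx : x ^ 2 = x + 1) :
    ∀ m : ℕ, x ^ (m + 1) = (Nat.fib (m + 1) : ℝ) * x + Nat.fib m := by
  intro m
  induction m with
  | zero => simp
  | succ m ih =>
    have : x ^ (m + 2) = x ^ (m + 1) * x := by ring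
    rw [this, ih, Nat.fib_add_two]
    push_cast
    nlinarith [hx]

lemma rat_lin_phi (a b : ℚ) (h : (a : ℝ) * phi + b = 0) : a = 0 ∧ b = 0 := by
  have hg : Irrational goldenRatio := goldenRatio_irrational
  by_cases ha : a = 0
  · subst ha
    simp at h
    exact ⟨rfl, by exact_mod_cast h⟩
  · exfalso
    apply hg
    refine ⟨-b / a, ?_⟩
    push_cast
    rw [phi_gold] at h
    field_simp
    have : (a : ℝ) ≠ 0 := by exact_mod_cast ha
    field_simp at h ⊢
    linarith

/-- The conjugation identity: any finite base-phi-like sum equal to an integer has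
its conjugate sum equal to the same integer. -/
lemma conj_sum (d : ℤ → ℕ) (s : Finset ℤ) (k : ℕ)
    (hsum : ∑ i ∈ s, (d i : ℝ) * phi ^ i = k) :
    ∑ i ∈ s, (d i : ℝ) * goldenConj ^ i = k := by
  classical
  -- choose M with i + M ≥ 1 for all i ∈ s
  obtain ⟨M, hM1, hM⟩ : ∃ M : ℕ, 1 ≤ M ∧ ∀ i ∈ s, 1 ≤ i + M := by
    refine ⟨1 + s.sup (fun i => (-i).toNat), by omega, fun i hi => ?_⟩
    have h : (-i).toNat ≤ s.sup (fun j => (-j).toNat) := Finset.le_sup (f := fun j => (-j).toNat) hi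
    omega
  set m : ℤ → ℕ := fun i => (i + M).toNat with hm
  have hmi : ∀ i ∈ s, ((m i : ℤ)) = i + M := fun i hi => by
    have := hM i hi; simp [hm]; omega
  have hm1 : ∀ i ∈ s, 1 ≤ m i := fun i hi => by
    have := hM i hi; have := hmi i hi; omega
  -- the phi-sum with shifted exponents
  have key : ∀ (x : ℝ), x ≠ 0 →
      ∑ i ∈ s, (d i : ℝ) * x ^ (m i) = (∑ i ∈ s, (d i : ℝ) * x ^ i) * x ^ (M : ℤ) := by
    intro x hx
    rw [Finset.sum_mul]
    refine Finset.sum_congr rfl fun i hi => ?_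
    rw [mul_assoc, ← zpow_natCast x (m i), hmi i hi, zpow_add₀ hx, zpow_natCast]
  -- express both sides with Fibonacci
  have fib_expand : ∀ (x : ℝ), x ^ 2 = x + 1 →
      ∑ i ∈ s, (d i : ℝ) * x ^ (m i)
        = (∑ i ∈ s, (d i : ℝ) * Nat.fib (m i)) * x + ∑ i ∈ s, (d i : ℝ) * Nat.fib (m i - 1) := by
    intro x hx
    rw [Finset.sum_mul, ← Finset.sum_add_distrib]
    refine Finset.sum_congr rfl fun i hi => ?_
    have h1 := hm1 i hi
    obtain ⟨p, hp⟩ : ∃ p, m i = p + 1 := ⟨m i - 1, by omega⟩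
    rw [hp, pow_fib_lin x hx p, Nat.add_sub_cancel]
    ring
  have hMfib : ∀ (x : ℝ), x ^ 2 = x + 1 →
      x ^ (M : ℤ) = (Nat.fib M : ℝ) * x + Nat.fib (M - 1) := by
    intro x hx
    obtain ⟨p, hp⟩ : ∃ p, M = p + 1 := ⟨M - 1, by omega⟩
    rw [zpow_natCast, hp, pow_fib_lin x hx p, Nat.add_sub_cancel]
  -- from the phi equation, identify coefficients
  have hphi : (∑ i ∈ s, (d i : ℝ) * Nat.fib (m i)) * phi + ∑ i ∈ s, (d i : ℝ) * Nat.fib (m i - 1)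
      = ((k * Nat.fib M : ℝ)) * phi + (k * Nat.fib (M - 1) : ℝ) := by
    rw [← fib_expand phi phi_sq, key phi phi_ne_zero, hsum, hMfib phi phi_sq]; ring
  set A : ℕ := ∑ i ∈ s, d i * Nat.fib (m i) with hA
  set B : ℕ := ∑ i ∈ s, d i * Nat.fib (m i - 1) with hB
  have hAc : (∑ i ∈ s, (d i : ℝ) * Nat.fib (m i)) = (A : ℝ) := by rw [hA]; push_cast; rfl
  have hBc : (∑ i ∈ s, (d i : ℝ) * Nat.fib (m i - 1)) = (B : ℝ) := by rw [hB]; push_cast; rfl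
  rw [hAc, hBc] at hphi
  set q1 : ℚ := (A : ℚ) - (k : ℚ) * Nat.fib M with hq1
  set q2 : ℚ := (B : ℚ) - (k : ℚ) * Nat.fib (M - 1) with hq2
  have hlin : (q1 : ℝ) * phi + (q2 : ℝ) = 0 := by
    rw [hq1, hq2]
    push_cast
    linarith [hphi]
  obtain ⟨h1, h2⟩ := rat_lin_phi _ _ hlin
  rw [hq1, sub_eq_zero] at h1
  rw [hq2, sub_eq_zero] at h2
  have hA' : (A : ℝ) = (k * Nat.fib M : ℝ) := by exact_mod_cast h1
  have hB' : (B : ℝ) = (k * Nat.fib (M - 1) : ℝ) := by exact_mod_cast h2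
  -- now conclude for psi
  have hpsi : (∑ i ∈ s, (d i : ℝ) * goldenConj ^ i) * goldenConj ^ (M : ℤ) = k * goldenConj ^ (M : ℤ) := by
    rw [← key goldenConj psi_ne_zero, fib_expand goldenConj psi_sq, hAc, hBc, hA', hB',
      hMfib goldenConj psi_sq]
    push_cast
    ring
  have hz : goldenConj ^ (M : ℤ) ≠ 0 := zpow_ne_zero _ psi_ne_zero
  exact mul_right_cancel₀ hz hpsi

/-- geometric bound: sum of phi^(-i) over a finite set of same-parity integers all ≥ b. -/
lemma geom_bound (r : ℤ) (s : Finset ℤ) : ∀ (b : ℤ), (∀ i ∈ s, b ≤ i) → (∀ i ∈ s, i % 2 = r) →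
    ∑ i ∈ s, phi ^ (-i) ≤ phi ^ (1 - b) := by
  classical
  induction s using Finset.strongInduction with
  | _ s ih =>
    intro b hb hr
    rcases s.eq_empty_or_nonempty with rfl | hne
    · simp
      exact le_of_lt (zpow_pos phi_pos _)
    · set m := s.min' hne with hmdef
      have hm : m ∈ s := s.min'_mem hne
      rw [← Finset.add_sum_erase _ _ hm]
      have h2 : ∀ i ∈ s.erase m, m + 2 ≤ i := by
        intro i hi
        obtain ⟨hne', hi'⟩ := Finset.mem_erase.mp hi
        have h1 : m ≤ i := s.min'_le i hi'
        have := hr i hi'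
        have := hr m hm
        omega
      have hrec := ih (s.erase m) (Finset.erase_ssubset hm) (m + 2) h2
        (fun i hi => hr i (Finset.mem_erase.mp hi).2)
      have step : phi ^ (-m) + phi ^ (1 - (m + 2)) = phi ^ (1 - m) := by
        have h := phi_zpow_rec (-m - 1)
        rw [show (-m - 1 + 2 : ℤ) = 1 - m by ring, show (-m - 1 + 1 : ℤ) = -m by ring,
          show (-m - 1 : ℤ) = 1 - (m + 2) by ring] at h
        linarith
      calc phi ^ (-m) + ∑ i ∈ s.erase m, phi ^ (-i)
          ≤ phi ^ (-m) + phi ^ (1 - (m + 2)) := by linarith [hrec]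
        _ = phi ^ (1 - m) := step
        _ ≤ phi ^ (1 - b) := zpow_le_zpow_right₀ one_lt_phi.le (by have := hb m hm; omega)

lemma lucas_odd_lt (m : ℕ) (hm : Odd m) : (Lucas m : ℝ) < phi ^ (m : ℤ) := by
  rw [lucas_real, zpow_natCast]
  have : goldenConj ^ m < 0 := Odd.pow_neg hm goldenConj_neg
  linarith

/-- Any base-phi expansion of `k ≤ Lucas (2n-1)` vanishes at positions with |j| ≥ 2n-1. -/
lemma support_bound (n : ℕ) (hn : 1 ≤ n) (k : ℕ) (hk : k ≤ Lucas (2 * n - 1))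
    (d : ℤ → ℕ) (hd : IsBasePhi k d) :
    ∀ j : ℤ, (2 * n - 1 : ℤ) ≤ |j| → d j = 0 := by
  classical
  obtain ⟨hfin, hle, hcons, hsum⟩ := hd
  set s := hfin.toFinset with hs
  have hmem : ∀ i : ℤ, i ∈ s ↔ d i ≠ 0 := by intro i; simp [hs]
  have hsum_fin : ∑ i ∈ s, (d i : ℝ) * phi ^ i = k := by
    rw [← tsum_eq_sum (L := SummationFilter.unconditional ℤ) (fun b hb => ?_)]
    · exact hsum
    · have : d b = 0 := by by_contra h; exact hb ((hmem b).mpr h)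
      simp [this]
  have hodd : Odd (2 * n - 1) := ⟨n - 1, by omega⟩
  have hcast : ((2 * n - 1 : ℕ) : ℤ) = 2 * n - 1 := by omega
  have hkR : (k : ℝ) ≤ Lucas (2 * n - 1) := by exact_mod_cast hk
  have hklt : (k : ℝ) < phi ^ ((2 * n : ℤ) - 1) := by
    calc (k : ℝ) ≤ Lucas (2 * n - 1) := hkR
      _ < phi ^ (((2 * n - 1 : ℕ)) : ℤ) := lucas_odd_lt _ hodd
      _ = phi ^ ((2 * n : ℤ) - 1) := by rw [hcast]
  have nonneg : ∀ i : ℤ, 0 ≤ (d i : ℝ) * phi ^ i :=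
    fun i => mul_nonneg (Nat.cast_nonneg _) (zpow_pos phi_pos i).le
  -- positive side
  have hpos : ∀ j : ℤ, (2 * n - 1 : ℤ) ≤ j → d j = 0 := by
    intro j hj
    by_contra hne
    have hjs : j ∈ s := (hmem j).mpr hne
    have h1n : 1 ≤ d j := Nat.one_le_iff_ne_zero.mpr hne
    have h1 : (1 : ℝ) ≤ (d j : ℝ) := by exact_mod_cast h1n
    have hterm : phi ^ j ≤ (d j : ℝ) * phi ^ j := by
      nlinarith [zpow_pos phi_pos j]
    have hle' : (d j : ℝ) * phi ^ j ≤ ∑ i ∈ s, (d i : ℝ) * phi ^ i :=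
      Finset.single_le_sum (fun i _ => nonneg i) hjs
    have : phi ^ ((2 * n : ℤ) - 1) ≤ phi ^ j := zpow_le_zpow_right₀ one_lt_phi.le hj
    rw [hsum_fin] at hle'
    linarith
  -- negative side
  intro j hj
  rcases le_or_gt (2 * n - 1 : ℤ) j with hj' | hj'
  · exact hpos j hj'
  · -- j ≤ -(2n-1)
    have hjneg : j ≤ -(2 * n - 1 : ℤ) := by
      rcases abs_cases j with ⟨h, _⟩ | ⟨h, _⟩ <;> omega
    by_contra hne
    have hjs : j ∈ s := (hmem j).mpr hne
    have hne' : s.Nonempty := ⟨j, hjs⟩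
    set j0 := s.min' hne' with hj0def
    have hj0mem : j0 ∈ s := s.min'_mem hne'
    have hj0le : j0 ≤ j := s.min'_le j hjs
    have hj0min : ∀ i ∈ s, j0 ≤ i := fun i hi => s.min'_le i hi
    have hd0 : d j0 = 1 := by
      have := hle j0; have := (hmem j0).mp hj0mem; omega
    have hnocons : d (j0 + 1) = 0 := by
      have h := hcons j0
      rw [hd0, one_mul] at h
      exact h
    have hj01ns : j0 + 1 ∉ s := by
      intro h; exact ((hmem _).mp h) hnocons
    have hpsisum : ∑ i ∈ s, (d i : ℝ) * goldenConj ^ i = k := conj_sum d s k hsum_fin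
    rw [← Finset.add_sum_erase _ _ hj0mem] at hpsisum
    have hkpos : (0 : ℝ) ≤ k := Nat.cast_nonneg k
    have herase : ∀ i ∈ s.erase j0, j0 + 2 ≤ i ∨ (j0 + 1 < i ∧ i ≠ j0 + 1) := by
      intro i hi
      obtain ⟨hne2, hi'⟩ := Finset.mem_erase.mp hi
      have := hj0min i hi'
      left
      rcases eq_or_lt_of_le this with h | h
      · exact absurd h.symm hne2
      · have : i ≠ j0 + 1 := fun h' => hj01ns (h' ▸ hi')
        omega
    have herase2 : ∀ i ∈ s.erase j0, j0 + 2 ≤ i := by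
      intro i hi; rcases herase i hi with h | ⟨h, _⟩; exact h; omega
    -- two parity cases
    rcases Int.even_or_odd j0 with hev | hod
    · -- j0 even: k ≥ φ^{-j0} - ∑_{odd i in erase} φ^{-i} ≥ φ^{-j0-1}
      have hterm0 : (d j0 : ℝ) * goldenConj ^ j0 = phi ^ (-j0) := by
        rw [hd0, psi_zpow_even hev]; norm_num
      set t := (s.erase j0).filter (fun i => i % 2 = 1) with ht
      have hbound : ∑ i ∈ s.erase j0, (d i : ℝ) * goldenConj ^ i ≥ -∑ i ∈ t, phi ^ (-i) := by
        rw [ht, ← Finset.sum_filter_add_sum_filter_not (s.erase j0) (fun i => i % 2 = 1)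
          (fun i => (d i : ℝ) * goldenConj ^ i)]
        have h1 : ∑ i ∈ (s.erase j0).filter (fun i => i % 2 = 1), (d i : ℝ) * goldenConj ^ i
            ≥ -∑ i ∈ (s.erase j0).filter (fun i => i % 2 = 1), phi ^ (-i) := by
          rw [← Finset.sum_neg_distrib]
          apply Finset.sum_le_sum
          intro i hi
          have hoddi : Odd i := by
            have := (Finset.mem_filter.mp hi).2
            exact Int.odd_iff.mpr this
          rw [psi_zpow_odd hoddi]
          have hdle : (d i : ℝ) ≤ 1 := by exact_mod_cast hle i
          have hp : (0:ℝ) < phi ^ (-i) := zpow_pos phi_pos _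
          nlinarith [(Nat.cast_nonneg (d i) : (0:ℝ) ≤ (d i : ℝ))]
        have h2 : ∑ i ∈ (s.erase j0).filter (fun i => ¬ i % 2 = 1), (d i : ℝ) * goldenConj ^ i ≥ 0 := by
          apply Finset.sum_nonneg
          intro i hi
          have hevi : Even i := by
            have := (Finset.mem_filter.mp hi).2
            have := Int.emod_two_eq i
            exact Int.even_iff.mpr (by omega)
          rw [psi_zpow_even hevi]
          exact mul_nonneg (Nat.cast_nonneg _) (zpow_pos phi_pos _).le
        linarith
      have hgeo : ∑ i ∈ t, phi ^ (-i) ≤ phi ^ (1 - (j0 + 3)) := by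
        apply geom_bound 1 t (j0 + 3)
        · intro i hi
          obtain ⟨hi1, hi2⟩ := Finset.mem_filter.mp hi
          have h1 := herase2 i hi1
          have h2 : i ≠ j0 + 1 := fun h' => hj01ns (h' ▸ (Finset.mem_erase.mp hi1).2)
          have : j0 % 2 = 0 := Int.even_iff.mp hev
          omega
        · exact fun i hi => (Finset.mem_filter.mp hi).2
      have comb : phi ^ (-j0) - phi ^ (1 - (j0 + 3)) ≤ (k : ℝ) := by
        rw [← hpsisum, hterm0]
        linarith
      -- φ^{-j0} - φ^{-j0-2} = φ^{-j0-1}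
      have hid : phi ^ (-j0) - phi ^ (1 - (j0 + 3)) = phi ^ (-j0 - 1) := by
        have h := phi_zpow_rec (-j0 - 2)
        rw [show (-j0 - 2 + 2 : ℤ) = -j0 by ring, show (-j0 - 2 + 1 : ℤ) = -j0 - 1 by ring,
          show (-j0 - 2 : ℤ) = 1 - (j0 + 3) by ring] at h
        linarith
      -- -j0 is even and ≥ 2n-1 so -j0 ≥ 2n, -j0-1 ≥ 2n-1
      have hJ : (2 * n : ℤ) - 1 ≤ -j0 - 1 := by
        have h1 : (2 * n : ℤ) - 1 ≤ -j0 := by omega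
        have : j0 % 2 = 0 := Int.even_iff.mp hev
        omega
      have : phi ^ ((2 * n : ℤ) - 1) ≤ phi ^ (-j0 - 1) := zpow_le_zpow_right₀ one_lt_phi.le hJ
      rw [hid] at comb
      linarith
    · -- j0 odd: k ≤ -φ^{-j0} + φ^{-j0-2} < 0
      have hterm0 : (d j0 : ℝ) * goldenConj ^ j0 = -phi ^ (-j0) := by
        rw [hd0, psi_zpow_odd hod]; norm_num
      set t := (s.erase j0).filter (fun i => i % 2 = 0) with ht
      have hbound : ∑ i ∈ s.erase j0, (d i : ℝ) * goldenConj ^ i ≤ ∑ i ∈ t, phi ^ (-i) := by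
        rw [ht, ← Finset.sum_filter_add_sum_filter_not (s.erase j0) (fun i => i % 2 = 0)
          (fun i => (d i : ℝ) * goldenConj ^ i)]
        have h1 : ∑ i ∈ (s.erase j0).filter (fun i => i % 2 = 0), (d i : ℝ) * goldenConj ^ i
            ≤ ∑ i ∈ (s.erase j0).filter (fun i => i % 2 = 0), phi ^ (-i) := by
          apply Finset.sum_le_sum
          intro i hi
          have hevi : Even i := Int.even_iff.mpr (Finset.mem_filter.mp hi).2
          rw [psi_zpow_even hevi]
          have hdle : (d i : ℝ) ≤ 1 := by exact_mod_cast hle i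
          have hp : (0:ℝ) < phi ^ (-i) := zpow_pos phi_pos _
          nlinarith
        have h2 : ∑ i ∈ (s.erase j0).filter (fun i => ¬ i % 2 = 0), (d i : ℝ) * goldenConj ^ i ≤ 0 := by
          apply Finset.sum_nonpos
          intro i hi
          have hoddi : Odd i := by
            have := (Finset.mem_filter.mp hi).2
            have := Int.emod_two_eq i
            exact Int.odd_iff.mpr (by omega)
          rw [psi_zpow_odd hoddi]
          have hp : (0:ℝ) < phi ^ (-i) := zpow_pos phi_pos _
          nlinarith [(Nat.cast_nonneg (d i) : (0:ℝ) ≤ (d i : ℝ))]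
        linarith
      have hgeo : ∑ i ∈ t, phi ^ (-i) ≤ phi ^ (1 - (j0 + 3)) := by
        apply geom_bound 0 t (j0 + 3)
        · intro i hi
          obtain ⟨hi1, hi2⟩ := Finset.mem_filter.mp hi
          have h1 := herase2 i hi1
          have h2 : i ≠ j0 + 1 := fun h' => hj01ns (h' ▸ (Finset.mem_erase.mp hi1).2)
          have : j0 % 2 = 1 := Int.odd_iff.mp hod
          omega
        · exact fun i hi => (Finset.mem_filter.mp hi).2
      have comb : (k : ℝ) ≤ -phi ^ (-j0) + phi ^ (1 - (j0 + 3)) := by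
        rw [← hpsisum, hterm0]
        linarith
      have hlt : phi ^ (1 - (j0 + 3)) < phi ^ (-j0) := by
        apply zpow_lt_zpow_right₀ one_lt_phi
        omega
      have hkpos : (0 : ℝ) ≤ k := Nat.cast_nonneg k
      linarith

/-- For `n ≥ 1` and `0 ≤ k ≤ L (2n-1)`: if `d` is a base-phi expansion of `k`, then
adding digits 1 at positions `2n` and `-2n` gives a base-phi expansion of `L (2n) + k`. -/
theorem expansion_lucas_add (n : ℕ) (hn : 1 ≤ n) (k : ℕ) (hk : k ≤ Lucas (2 * n - 1))
    (d : ℤ → ℕ) (hd : IsBasePhi k d) :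
    IsBasePhi (Lucas (2 * n) + k)
      (fun i : ℤ => if i = (2 * n : ℤ) ∨ i = -(2 * n : ℤ) then 1 else d i) := by
  classical
  have hsb := support_bound n hn k hk d hd
  obtain ⟨hfin, hle, hcons, hsum⟩ := hd
  have hN1 : (1 : ℤ) ≤ 2 * n - 1 := by omega
  -- vanishing facts
  have hv : ∀ j : ℤ, (2 * n - 1 : ℤ) ≤ j ∨ j ≤ -(2 * n - 1 : ℤ) → d j = 0 := by
    intro j hj
    apply hsb
    rcases hj with h | h <;> rcases abs_cases j with ⟨h2, _⟩ | ⟨h2, _⟩ <;> omega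
  refine ⟨?_, ?_, ?_, ?_⟩
  · apply Set.Finite.subset (hfin.union ((Set.finite_singleton (-(2 * n : ℤ))).insert (2 * n : ℤ)))
    intro i hi
    simp only [Set.mem_setOf_eq] at hi
    by_cases h : i = (2 * n : ℤ) ∨ i = -(2 * n : ℤ)
    · rcases h with h | h
      · exact Or.inr (by simp [h])
      · exact Or.inr (by simp [h])
    · left
      simp only [if_neg h] at hi
      exact hi
  · intro i
    by_cases h : i = (2 * n : ℤ) ∨ i = -(2 * n : ℤ) <;> simp [h, hle i]
  · intro i
    by_cases h3 : i + 1 = (2 * n : ℤ) ∨ i + 1 = -(2 * n : ℤ)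
    · have h4 : ¬(i = (2 * n : ℤ) ∨ i = -(2 * n : ℤ)) := by
        rcases h3 with h | h <;> omega
      have h5 : d i = 0 := by
        rcases h3 with h | h
        · exact hv i (Or.inl (by omega))
        · exact hv i (Or.inr (by omega))
      simp [h4, h5]
    · simp only [if_neg h3]
      by_cases h1 : i = (2 * n : ℤ) ∨ i = -(2 * n : ℤ)
      · have h5 : d (i + 1) = 0 := by
          rcases h1 with h | h
          · exact hv (i + 1) (Or.inl (by omega))
          · exact hv (i + 1) (Or.inr (by omega))
        simp [h5]
      · simp only [if_neg h1]
        exact hcons i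
  · -- the sum
    have hd2n : d (2 * n : ℤ) = 0 := hv _ (by omega)
    have hdm2n : d (-(2 * n : ℤ)) = 0 := hv _ (by omega)
    have hptwise : ∀ i : ℤ,
        (if i = (2 * n : ℤ) ∨ i = -(2 * n : ℤ) then (1:ℝ) else (d i : ℝ)) * phi ^ i
          = (d i : ℝ) * phi ^ i + (if i = (2 * n : ℤ) then phi ^ (2 * n : ℤ) else 0)
            + (if i = -(2 * n : ℤ) then phi ^ (-(2 * n : ℤ)) else 0) := by
      intro i
      by_cases h1 : i = (2 * n : ℤ)
      · subst h1
        have h2 : ¬((2 * n : ℤ) = -(2 * n : ℤ)) := by omega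
        simp [hd2n, h2]
      · by_cases h2 : i = -(2 * n : ℤ)
        · subst h2
          simp [hdm2n, h1]
        · have h3 : ¬(i = (2 * n : ℤ) ∨ i = -(2 * n : ℤ)) := by tauto
          simp [h3, h1, h2]
    have hsummable : Summable (fun i : ℤ => (d i : ℝ) * phi ^ i) := by
      apply summable_of_finite_support
      apply hfin.subset
      intro i hi
      simp only [Function.mem_support] at hi
      simp only [Set.mem_setOf_eq]
      intro h
      simp [h] at hi
    have hs1 : Summable (fun i : ℤ => if i = (2 * n : ℤ) then phi ^ (2 * n : ℤ) else 0) :=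
      (hasSum_ite_eq _ _).summable
    have hs2 : Summable (fun i : ℤ => if i = -(2 * n : ℤ) then phi ^ (-(2 * n : ℤ)) else 0) :=
      (hasSum_ite_eq _ _).summable
    simp only [Nat.cast_ite, Nat.cast_one]
    calc ∑' i : ℤ, (if i = (2 * n : ℤ) ∨ i = -(2 * n : ℤ) then (1:ℝ) else (d i : ℝ)) * phi ^ i
        = ∑' i : ℤ, ((d i : ℝ) * phi ^ i + (if i = (2 * n : ℤ) then phi ^ (2 * n : ℤ) else 0)
            + (if i = -(2 * n : ℤ) then phi ^ (-(2 * n : ℤ)) else 0)) := by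
          exact tsum_congr hptwise
      _ = (k : ℝ) + phi ^ (2 * n : ℤ) + phi ^ (-(2 * n : ℤ)) := by
          rw [Summable.tsum_add (hsummable.add hs1) hs2, Summable.tsum_add hsummable hs1, hsum,
            tsum_ite_eq, tsum_ite_eq]
      _ = ((Lucas (2 * n) + k : ℕ) : ℝ) := by
          have hL : (Lucas (2 * n) : ℝ) = phi ^ (2 * n : ℤ) + phi ^ (-(2 * n : ℤ)) := by
            rw [lucas_real (2 * n)]
            have hev : Even (2 * n) := ⟨n, by ring⟩
            have : goldenConj ^ (2 * n) = phi ^ (-(2 * n : ℤ)) := by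
              have := psi_zpow_even (i := (2 * n : ℤ)) ⟨(n : ℤ), by ring⟩
              rw [← this, ← zpow_natCast goldenConj (2 * n)]
              norm_num
            rw [this, ← zpow_natCast phi (2 * n)]
            norm_num
          push_cast
          rw [hL]
          ring
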